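/- arXiv:0707.1668 — 2 statements merged into one kernel-verified Lean document; each statement's English description precedes it below -/
import Mathlib

section
/- Let R be a commutative ring and I an ideal of R such that R is I-adically complete. Let Φ : R → R be a ring endomorphism with Φ(I) ⊆ I². Then every unit u of R with u ≡ 1 (mod I) can be written as u = β · Φ(β)⁻¹ for some unit β of R with β ≡ 1 (mod I). -/
/-!
Starting from `1`, iterate `x ↦ u · Φ(x)`. Since `Φ(I) ⊆ I²`, this map is `I`-adically
contracting on `1 + I`: it sends `x ≡ y (mod Iⁿ)` to congruence mod `Iⁿ⁺¹` for `n ≥ 1`.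
Completeness gives a fixed point `β = u · Φ(β)` with `β ≡ 1 (mod I)`, and such a `β` is a unit
because `I` lies in the Jacobson radical.
-/

namespace IsAdicComplete

variable {R M : Type*} [CommRing R] [AddCommGroup M] [Module R M] {I : Ideal R}

theorem exists_fixedPoint_of_smodEq_pow_succ [IsAdicComplete I M] (T : M → M)
    (hT : ∀ n ≠ 0, ∀ x y, x ≡ y [SMOD (I ^ n • ⊤ : Submodule R M)] →
      T x ≡ T y [SMOD (I ^ (n + 1) • ⊤ : Submodule R M)])
    (x₀ : M) (h₀ : x₀ ≡ T x₀ [SMOD (I • ⊤ : Submodule R M)]) :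
    ∃ L, T L = L ∧ x₀ ≡ L [SMOD (I • ⊤ : Submodule R M)] := by
  set f : ℕ → M := fun n ↦ T^[n] x₀
  have hsucc : ∀ n, f n ≡ f (n + 1) [SMOD (I ^ (n + 1) • ⊤ : Submodule R M)] := by
    intro n
    induction n with
    | zero => simpa [f] using h₀
    | succ n ih =>
      simp only [f, Function.iterate_succ_apply'] at ih ⊢
      exact hT (n + 1) n.succ_ne_zero _ _ ih
  have hcauchy : AdicCompletion.IsAdicCauchy I M f :=
    (AdicCompletion.isAdicCauchy_iff I M f).2 fun n ↦
      (hsucc n).mono (Submodule.pow_smul_top_le I M n.le_succ)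
  obtain ⟨L, hL⟩ := IsPrecomplete.prec inferInstance hcauchy
  refine ⟨L, (IsHausdorff.eq_iff_smodEq (I := I)).2 fun n ↦ ?_, ?_⟩
  · have hfix : T L ≡ L [SMOD (I ^ (n + 2) • ⊤ : Submodule R M)] :=
      calc T L ≡ T (f (n + 1)) [SMOD (I ^ (n + 2) • ⊤ : Submodule R M)] :=
            hT (n + 1) n.succ_ne_zero _ _ (hL (n + 1)).symm
        _ = f (n + 2) := (Function.iterate_succ_apply' T (n + 1) x₀).symm
        _ ≡ L [SMOD (I ^ (n + 2) • ⊤ : Submodule R M)] := hL (n + 2)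
    exact hfix.mono (Submodule.pow_smul_top_le I M (by omega))
  · simpa [f] using (hsucc 0).trans (hL 1)

end IsAdicComplete

theorem RingHom.map_smodEq_pow_succ {R : Type*} [CommRing R] {I : Ideal R} {Φ : R →+* R}
    (hΦ : I ≤ (I ^ 2).comap Φ) {n : ℕ} (hn : n ≠ 0) {x y : R} (h : x ≡ y [SMOD I ^ n]) :
    Φ x ≡ Φ y [SMOD I ^ (n + 1)] := by
  rw [SModEq.sub_mem] at h ⊢
  rw [← map_sub]
  have hmap : (I ^ n).map Φ ≤ I ^ (2 * n) := by
    rw [Ideal.map_pow, pow_mul]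
    exact Ideal.pow_right_mono (Ideal.map_le_iff_le_comap.2 hΦ) n
  exact Ideal.pow_le_pow_right (by omega) (hmap (Ideal.mem_map_of_mem Φ h))

/-- If `R` is `I`-adically complete and `Φ : R → R` is a ring endomorphism with `Φ(I) ⊆ I²`,
then every unit `u ≡ 1 (mod I)` can be written as `u = β · Φ(β)⁻¹` for a unit `β ≡ 1 (mod I)`. -/
theorem unit_eq_mul_inv_map_of_isAdicComplete
    (R : Type*) [CommRing R] (I : Ideal R) [IsAdicComplete I R]
    (Φ : R →+* R) (hΦ : ∀ x ∈ I, Φ x ∈ I ^ 2)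
    (u : Rˣ) (hu : (u : R) - 1 ∈ I) :
    ∃ β : Rˣ, (β : R) - 1 ∈ I ∧ u = β * (Units.map (Φ : R →* R) β)⁻¹ := by
  have hcontr : ∀ n ≠ 0, ∀ x y : R, x ≡ y [SMOD (I ^ n • ⊤ : Ideal R)] →
      u * Φ x ≡ u * Φ y [SMOD (I ^ (n + 1) • ⊤ : Ideal R)] := by
    intro n hn x y hxy
    simp only [smul_eq_mul, Ideal.mul_top] at hxy ⊢
    exact (RingHom.map_smodEq_pow_succ hΦ hn hxy).smul (u : R)
  have h₀ : (1 : R) ≡ u * Φ 1 [SMOD (I • ⊤ : Ideal R)] := by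
    rw [map_one, mul_one, smul_eq_mul, Ideal.mul_top, SModEq.sub_mem, ← neg_sub]
    exact neg_mem hu
  obtain ⟨β, hβ, hβ_smod⟩ :=
    IsAdicComplete.exists_fixedPoint_of_smodEq_pow_succ _ hcontr 1 h₀
  have hβ₁ : β - 1 ∈ I := by
    rw [smul_eq_mul, Ideal.mul_top, SModEq.sub_mem, ← neg_sub] at hβ_smod
    simpa using neg_mem hβ_smod
  have hunit : IsUnit β :=
    Ideal.isUnit_of_sub_one_mem_jacobson_bot β (IsAdicComplete.le_jacobson_bot I hβ₁)
  refine ⟨hunit.unit, hβ₁, ?_⟩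
  rw [eq_mul_inv_iff_mul_eq]
  ext
  simpa using hβ
end

section
/- Let p be a prime, k a perfect field of characteristic p, and l a natural number. Let R = k[[x₁,…,x_l]] be the ring of formal power series in l variables over k and let R^p denote the subring of R which is the range of the Frobenius endomorphism f ↦ f^p. Then the family of monomials x₁^{e₁}⋯x_l^{e_l}, indexed by the tuples (e₁,…,e_l) with 0 ≤ e_i ≤ p−1 for all i, is a basis of R as a module over the subring R^p. -/
/-!
In characteristic `p`, `(∑ a_m x^m)^p = ∑ a_m^p x^{p m}`. Every exponent vector is uniquely
`p q + e` with `0 ≤ e_i < p`, so the coefficient of `x^{p q + e}` in `∑_e g_e^p x^e` is the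
`p`-th power of the coefficient of `x^q` in `g_e`. Hence this sum vanishes only if every `g_e`
does (`k` is reduced), and since `k` is perfect every series is such a sum.
-/

/-- `k[[x₁,…,x_l]]` has characteristic `p` when `k` does. -/
instance MvPowerSeries.instCharP (p : ℕ) (σ k : Type*) [Field k] [CharP k p] :
    CharP (MvPowerSeries σ k) p :=
  charP_of_injective_ringHom
    (f := MvPowerSeries.C (σ := σ) (R := k))
    (fun a b hab => by
      simpa using congrArg (MvPowerSeries.constantCoeff (σ := σ) (R := k)) hab) p

namespace MvPowerSeries

section Frobenius

variable {σ k : Type*} [CommRing k] {p : ℕ} [ExpChar k p]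

theorem coeff_nsmul_pow_char (f : MvPowerSeries σ k) (m : σ →₀ ℕ) :
    coeff (p • m) (f ^ p) = coeff m f ^ p := by
  rw [← map_frobenius_expand p (expChar_ne_zero k p), coeff_map, coeff_expand_smul, frobenius_def]

theorem coeff_pow_char_of_not_dvd (f : MvPowerSeries σ k) {m : σ →₀ ℕ} {i : σ}
    (h : ¬ p ∣ m i) : coeff m (f ^ p) = 0 := by
  rw [← map_frobenius_expand p (expChar_ne_zero k p), coeff_map,
    coeff_expand_of_not_dvd _ _ _ h, map_zero]

end Frobenius

section Digits

variable {σ : Type*} [Finite σ] {p : ℕ}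

/-- The exponent vector `(e₁, …, e_l)` of the monomial `x₁^{e₁} ⋯ x_l^{e_l}`. -/
noncomputable def finExponents (e : σ → Fin p) : σ →₀ ℕ :=
  Finsupp.equivFunOnFinite.symm fun i => e i

@[simp]
theorem finExponents_apply (e : σ → Fin p) (i : σ) : finExponents e i = e i := rfl

theorem exists_eq_nsmul_add_finExponents [NeZero p] (d : σ →₀ ℕ) :
    ∃ (q : σ →₀ ℕ) (e : σ → Fin p), d = p • q + finExponents e :=
  ⟨d.mapRange (· / p) (Nat.zero_div p), fun i => Fin.ofNat p (d i), by
    ext i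
    simp [Nat.div_add_mod]⟩

theorem prod_X_pow_eq_monomial {k : Type*} [CommRing k] [Fintype σ] (e : σ → Fin p) :
    ∏ i, (X i : MvPowerSeries σ k) ^ (e i : ℕ) = monomial (finExponents e) 1 := by
  rw [monomial_one_eq, Finsupp.prod_fintype _ _ fun _ => pow_zero _]
  rfl

end Digits

variable {σ k : Type*} [Fintype σ] [CommRing k] {p : ℕ} [ExpChar k p]

theorem coeff_pow_mul_monomial_finExponents (g : MvPowerSeries σ k) (q : σ →₀ ℕ)
    (e e' : σ → Fin p) :
    coeff (p • q + finExponents e) (g ^ p * monomial (finExponents e') 1) =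
      if e' = e then coeff q g ^ p else 0 := by
  rw [coeff_mul_monomial, mul_one]
  by_cases he : e' = e
  · rw [he, if_pos le_add_self, add_tsub_cancel_right, coeff_nsmul_pow_char, if_pos rfl]
  rw [if_neg he]
  split_ifs with hle
  · obtain ⟨i, hi⟩ := Function.ne_iff.mp he
    refine coeff_pow_char_of_not_dvd g (i := i) fun ⟨c, hc⟩ => hi (Fin.ext ?_)
    have hle_i : (e' i : ℕ) ≤ p * q i + e i := by simpa using hle i
    have hsum : p * q i + e i = p * c + e' i := by
      simp only [Finsupp.tsub_apply, Finsupp.add_apply, Finsupp.smul_apply, smul_eq_mul,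
        finExponents_apply] at hc
      omega
    have hmod := congrArg (· % p) hsum
    simpa [Nat.mul_add_mod, Nat.mod_eq_of_lt] using hmod.symm
  · rfl

variable [DecidableEq σ]

theorem coeff_sum_pow_mul_monomial_finExponents (g : (σ → Fin p) → MvPowerSeries σ k)
    (q : σ →₀ ℕ) (e : σ → Fin p) :
    coeff (p • q + finExponents e) (∑ e', g e' ^ p * monomial (finExponents e') 1) =
      coeff q (g e) ^ p := by
  simp only [map_sum, coeff_pow_mul_monomial_finExponents, Finset.sum_ite_eq',
    Finset.mem_univ, if_true]

theorem eq_zero_of_sum_pow_mul_monomial_finExponents_eq_zero [IsReduced k]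
    {g : (σ → Fin p) → MvPowerSeries σ k}
    (h : ∑ e, g e ^ p * monomial (finExponents e) 1 = 0) (e : σ → Fin p) : g e = 0 := by
  ext q
  have hq := congrArg (coeff (p • q + finExponents e)) h
  rw [coeff_sum_pow_mul_monomial_finExponents, map_zero] at hq
  simpa using IsReduced.eq_zero _ ⟨p, hq⟩

theorem exists_sum_pow_mul_monomial_finExponents_eq [PerfectRing k p] (f : MvPowerSeries σ k) :
    ∃ g : (σ → Fin p) → MvPowerSeries σ k, ∑ e, g e ^ p * monomial (finExponents e) 1 = f := by
  have : NeZero p := ⟨expChar_ne_zero k p⟩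
  let g (e : σ → Fin p) : MvPowerSeries σ k :=
    fun q => (frobeniusEquiv k p).symm (coeff (p • q + finExponents e) f)
  refine ⟨g, ?_⟩
  ext d
  obtain ⟨q, e, rfl⟩ := exists_eq_nsmul_add_finExponents (p := p) d
  rw [coeff_sum_pow_mul_monomial_finExponents]
  exact frobeniusEquiv_symm_pow_p k p _

end MvPowerSeries

open MvPowerSeries in
/-- Let `k` be a perfect field of characteristic `p` and `R = k[[x₁,…,x_l]]`.  The monomials
`x₁^{e₁} ⋯ x_l^{e_l}` with `0 ≤ e_i ≤ p - 1` form a basis of `R` as a module over the subring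
`R^p`, the range of the Frobenius endomorphism `f ↦ f^p`. -/
theorem mvPowerSeries_basis_over_frobenius_range
    (p : ℕ) [Fact p.Prime] (k : Type*) [Field k] [CharP k p] [PerfectRing k p] (l : ℕ) :
    ∃ b : Module.Basis (Fin l → Fin p) ((frobenius (MvPowerSeries (Fin l) k) p).range)
        (MvPowerSeries (Fin l) k),
      ∀ e : Fin l → Fin p, b e = ∏ i : Fin l, (MvPowerSeries.X i) ^ ((e i : ℕ)) := by
  set S := (frobenius (MvPowerSeries (Fin l) k) p).range
  set v : (Fin l → Fin p) → MvPowerSeries (Fin l) k := fun e => ∏ i, X i ^ (e i : ℕ)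
  have hv : ∀ e, v e = monomial (finExponents e) 1 := prod_X_pow_eq_monomial
  have hli : LinearIndependent S v := by
    refine Fintype.linearIndependent_iff.mpr fun c hc e => ?_
    choose g hg using fun e => (c e).2
    have hg0 := eq_zero_of_sum_pow_mul_monomial_finExponents_eq_zero (g := g) (by
      simpa only [Subring.smul_def, smul_eq_mul, ← hg, frobenius_def, hv] using hc) e
    exact Subtype.ext (by rw [← hg, hg0, map_zero, ZeroMemClass.coe_zero])
  have hsp : ⊤ ≤ Submodule.span S (Set.range v) := by
    rintro f -
    obtain ⟨g, rfl⟩ := exists_sum_pow_mul_monomial_finExponents_eq (p := p) f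
    refine Submodule.sum_mem _ fun e _ => ?_
    rw [← hv]
    exact Submodule.smul_mem _ (⟨g e ^ p, g e, rfl⟩ : S) (Submodule.subset_span ⟨e, rfl⟩)
  exact ⟨Module.Basis.mk hli hsp, Module.Basis.mk_apply hli hsp⟩
end
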